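/- Let S be a second countable locally compact Hausdorff groupoid with Haar system {κ^u}, μ a Radon measure on S⁽⁰⁾, ν = μ∘κ, ν₀ a finite measure equivalent to ν, and [μ] = s_*ν₀ the saturation of μ. Then [μ] is quasi-invariant, and if μ is itself quasi-invariant then μ and [μ] are equivalent measures. -/

import Mathlib

open MeasureTheory Filter Topology

/-- Algebraic data of a groupoid: arrows, objects (units), range, source,
unit inclusion, (total extensions of) composition and inversion. -/
structure GroupoidData (Arr : Type) (Obj : Type) where
  r : Arr → Obj
  s : Arr → Obj
  unit : Obj → Arr
  comp : Arr → Arr → Arr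
  inv : Arr → Arr

/-- The axioms making `GroupoidData` an honest groupoid (composition is only
required to behave on composable pairs). -/
structure GroupoidData.IsGroupoid {Arr Obj : Type} (D : GroupoidData Arr Obj) : Prop where
  r_unit : ∀ u, D.r (D.unit u) = u
  s_unit : ∀ u, D.s (D.unit u) = u
  r_comp : ∀ a b, D.s a = D.r b → D.r (D.comp a b) = D.r a
  s_comp : ∀ a b, D.s a = D.r b → D.s (D.comp a b) = D.s b
  comp_assoc : ∀ a b c, D.s a = D.r b → D.s b = D.r c →
    D.comp (D.comp a b) c = D.comp a (D.comp b c)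
  unit_comp : ∀ a, D.comp (D.unit (D.r a)) a = a
  comp_unit : ∀ a, D.comp a (D.unit (D.s a)) = a
  r_inv : ∀ a, D.r (D.inv a) = D.s a
  s_inv : ∀ a, D.s (D.inv a) = D.r a
  inv_comp : ∀ a, D.comp (D.inv a) a = D.unit (D.s a)
  comp_inv : ∀ a, D.comp a (D.inv a) = D.unit (D.r a)

/-- A left action of the groupoid `G` on a set `X` with moment map `rX`;
`lact γ x` is only meaningful when `G.s γ = rX x`. -/
structure IsLeftActionOf {ArrG ObjG X : Type} (G : GroupoidData ArrG ObjG)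
    (rX : X → ObjG) (lact : ArrG → X → X) : Prop where
  moment : ∀ γ x, G.s γ = rX x → rX (lact γ x) = G.r γ
  unit_act : ∀ x, lact (G.unit (rX x)) x = x
  comp_act : ∀ γ ξ x, G.s γ = G.r ξ → G.s ξ = rX x →
    lact (G.comp γ ξ) x = lact γ (lact ξ x)

/-- A right action of the groupoid `H` on a set `X` with moment map `sX`;
`ract x η` is only meaningful when `sX x = H.r η`. -/
structure IsRightActionOf {ArrH ObjH X : Type} (H : GroupoidData ArrH ObjH)
    (sX : X → ObjH) (ract : X → ArrH → X) : Prop where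
  moment : ∀ x η, sX x = H.r η → sX (ract x η) = H.s η
  unit_act : ∀ x, ract x (H.unit (sX x)) = x
  comp_act : ∀ x η ζ, sX x = H.r η → H.s η = H.r ζ →
    ract x (H.comp η ζ) = ract (ract x η) ζ

/-- The algebraic part of `X` being a `(G,H)`-equivalence: commuting free
left `G`- and right `H`-actions, each moment map invariant under the other
action, whose fibres are exactly the orbits of the other action, and both
moment maps surjective. -/
structure IsEquivalenceData {ArrG ObjG ArrH ObjH X : Type}
    (G : GroupoidData ArrG ObjG) (H : GroupoidData ArrH ObjH)
    (rX : X → ObjG) (sX : X → ObjH)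
    (lact : ArrG → X → X) (ract : X → ArrH → X) : Prop where
  left_action : IsLeftActionOf G rX lact
  right_action : IsRightActionOf H sX ract
  commute : ∀ γ x η, G.s γ = rX x → sX x = H.r η →
    ract (lact γ x) η = lact γ (ract x η)
  rX_ract : ∀ x η, sX x = H.r η → rX (ract x η) = rX x
  sX_lact : ∀ γ x, G.s γ = rX x → sX (lact γ x) = sX x
  free_left : ∀ γ x, G.s γ = rX x → lact γ x = x → γ = G.unit (rX x)
  free_right : ∀ x η, sX x = H.r η → ract x η = x → η = H.unit (sX x)
  rX_fibres : ∀ x y, rX x = rX y ↔ ∃ η, sX x = H.r η ∧ ract x η = y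
  sX_fibres : ∀ x y, sX x = sX y ↔ ∃ γ, G.s γ = rX x ∧ lact γ x = y
  rX_surj : Function.Surjective rX
  sX_surj : Function.Surjective sX

/-- Continuity of the structure maps of a topological groupoid. -/
structure IsTopologicalGroupoid {Arr Obj : Type} [TopologicalSpace Arr]
    [TopologicalSpace Obj] (D : GroupoidData Arr Obj) : Prop where
  continuous_r : Continuous D.r
  continuous_s : Continuous D.s
  continuous_unit : Continuous D.unit
  continuous_inv : Continuous D.inv
  continuous_comp : Continuous fun p : {q : Arr × Arr // D.s q.1 = D.r q.2} =>
    D.comp p.val.1 p.val.2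

/-- A Haar system for groupoid data `D`, relative to a set `Real` of
"genuine" arrows (take `Real = Set.univ` for an honest groupoid): a family
of Radon measures `κ u`, `u` a unit, with support exactly the genuine arrows
with range `u`, left invariant, and continuous against compactly supported
continuous functions. -/
def IsHaarSystemOn {Arr Obj : Type} [TopologicalSpace Arr] [TopologicalSpace Obj]
    [MeasurableSpace Arr] (D : GroupoidData Arr Obj) (Real : Set Arr)
    (κ : Obj → MeasureTheory.Measure Arr) : Prop :=
  (∀ u, κ u ({a | D.r a = u} ∩ Real)ᶜ = 0) ∧
  (∀ u U, IsOpen U → (U ∩ ({a | D.r a = u} ∩ Real)).Nonempty → 0 < κ u U) ∧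
  (∀ u K, IsCompact K → κ u K < ⊤) ∧
  (∀ a ∈ Real, ∀ f : Arr → ℝ, Continuous f → HasCompactSupport f →
    ∫ b, f (D.comp a b) ∂(κ (D.s a)) = ∫ b, f b ∂(κ (D.r a))) ∧
  (∀ f : Arr → ℝ, Continuous f → HasCompactSupport f →
    Continuous fun u => ∫ b, f b ∂(κ u))

/-- The measure `ν = μ ∘ κ` on the arrows induced by a measure `μ` on the
units and a Haar system `κ`. -/
noncomputable def nuMeasure {Arr Obj : Type} [MeasurableSpace Arr] [MeasurableSpace Obj]
    (κ : Obj → MeasureTheory.Measure Arr) (μ : MeasureTheory.Measure Obj) :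
    MeasureTheory.Measure Arr :=
  μ.bind κ

/-- Quasi-invariance of a measure `μ` on the unit space: `ν = μ∘κ` is
equivalent to its image under the inversion map. -/
def IsQuasiInvariant {Arr Obj : Type} [MeasurableSpace Arr] [MeasurableSpace Obj]
    (κ : Obj → MeasureTheory.Measure Arr) (inv : Arr → Arr)
    (μ : MeasureTheory.Measure Obj) : Prop :=
  nuMeasure κ μ ≪ (nuMeasure κ μ).map inv ∧ (nuMeasure κ μ).map inv ≪ nuMeasure κ μ

/-!
Left invariance of the Haar system says that `κ^{s γ}` is the image of `κ^{r γ}` under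
`η ↦ γ⁻¹η`. Hence the measure induced by `s_*ν` disintegrates over `μ` into the images of
`κ^u ⊗ κ^u` under `(γ, η) ↦ γ⁻¹η`; inversion sends `γ⁻¹η` to `η⁻¹γ`, so swapping `γ` and `η`
shows that this measure is inversion invariant. Equivalent measures on the units induce
equivalent measures on the arrows, so `[μ]`, being equivalent to `s_*ν`, is quasi-invariant.
If `μ` is quasi-invariant, `s_*ν = r_*(inv_*ν)` is equivalent to `r_*ν`, which is `μ` with the
positive density `u ↦ κ^u(S)`.
-/

namespace GroupoidData

variable {Arr Obj : Type} {D : GroupoidData Arr Obj}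

namespace IsGroupoid

lemma eq_inv_of_comp_eq_unit (hD : D.IsGroupoid) {a b : Arr} (h : D.s a = D.r b)
    (hab : D.comp a b = D.unit (D.r a)) : b = D.inv a :=
  calc b = D.comp (D.unit (D.r b)) b := (hD.unit_comp b).symm
    _ = D.comp (D.comp (D.inv a) a) b := by rw [hD.inv_comp, h]
    _ = D.comp (D.inv a) (D.comp a b) := hD.comp_assoc _ _ _ (hD.s_inv a) h
    _ = D.comp (D.inv a) (D.unit (D.s (D.inv a))) := by rw [hab, hD.s_inv]
    _ = D.inv a := hD.comp_unit _

lemma inv_inv (hD : D.IsGroupoid) (a : Arr) : D.inv (D.inv a) = a :=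
  (hD.eq_inv_of_comp_eq_unit (hD.s_inv a) (by rw [hD.inv_comp, hD.r_inv])).symm

lemma inv_comp_cancel_left (hD : D.IsGroupoid) {a b : Arr} (h : D.s a = D.r b) :
    D.comp (D.inv a) (D.comp a b) = b :=
  calc D.comp (D.inv a) (D.comp a b) = D.comp (D.comp (D.inv a) a) b :=
        (hD.comp_assoc _ _ _ (hD.s_inv a) h).symm
    _ = D.comp (D.unit (D.r b)) b := by rw [hD.inv_comp, h]
    _ = b := hD.unit_comp b

lemma inv_comp_rev (hD : D.IsGroupoid) {a b : Arr} (h : D.s a = D.r b) :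
    D.inv (D.comp a b) = D.comp (D.inv b) (D.inv a) := by
  have hba : D.s (D.inv b) = D.r (D.inv a) := by rw [hD.s_inv, hD.r_inv, h]
  refine (hD.eq_inv_of_comp_eq_unit ?_ ?_).symm
  · rw [hD.s_comp _ _ h, hD.r_comp _ _ hba, hD.r_inv]
  · calc D.comp (D.comp a b) (D.comp (D.inv b) (D.inv a))
        = D.comp a (D.comp (D.comp b (D.inv b)) (D.inv a)) := by
          rw [hD.comp_assoc _ _ _ h (by rw [hD.r_comp _ _ hba, hD.r_inv]),
            hD.comp_assoc _ _ _ (hD.r_inv b).symm hba]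
      _ = D.comp a (D.inv a) := by rw [hD.comp_inv, ← h, ← hD.r_inv a, hD.unit_comp]
      _ = D.unit (D.r (D.comp a b)) := by rw [hD.comp_inv, hD.r_comp _ _ h]

end IsGroupoid

open Classical in
/-- Left translation by `a`, extended by the identity off the arrows composable with `a`. -/
noncomputable def leftTransl (D : GroupoidData Arr Obj) (a b : Arr) : Arr :=
  if D.r b = D.s a then D.comp a b else b

lemma leftTransl_of_r_eq {a b : Arr} (h : D.r b = D.s a) : D.leftTransl a b = D.comp a b := by
  simp [leftTransl, h]

lemma leftTransl_of_r_ne {a b : Arr} (h : D.r b ≠ D.s a) : D.leftTransl a b = b := by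
  simp [leftTransl, h]

lemma IsGroupoid.leftTransl_inv_leftTransl (hD : D.IsGroupoid) {a b : Arr}
    (h : D.r b = D.s a) : D.leftTransl (D.inv a) (D.leftTransl a b) = b := by
  rw [leftTransl_of_r_eq h, leftTransl_of_r_eq (by rw [hD.s_inv, hD.r_comp _ _ h.symm]),
    hD.inv_comp_cancel_left h.symm]

lemma IsGroupoid.inv_leftTransl_inv (hD : D.IsGroupoid) {a b : Arr} (h : D.r a = D.r b) :
    D.inv (D.leftTransl (D.inv a) b) = D.leftTransl (D.inv b) a := by
  rw [leftTransl_of_r_eq (by rw [hD.s_inv, h]), leftTransl_of_r_eq (by rw [hD.s_inv, h]),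
    hD.inv_comp_rev (by rw [hD.s_inv, h]), hD.inv_inv]

end GroupoidData

section Topology

open GroupoidData

variable {Arr Obj : Type} {D : GroupoidData Arr Obj} [TopologicalSpace Arr] [TopologicalSpace Obj]

lemma IsTopologicalGroupoid.isClosed_composable [T2Space Obj] (hDtop : IsTopologicalGroupoid D) :
    IsClosed {p : Arr × Arr | D.r p.2 = D.s p.1} :=
  isClosed_eq (hDtop.continuous_r.comp continuous_snd) (hDtop.continuous_s.comp continuous_fst)

lemma IsTopologicalGroupoid.continuousOn_comp (hDtop : IsTopologicalGroupoid D) :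
    ContinuousOn (fun p : Arr × Arr => D.comp p.1 p.2) {p | D.r p.2 = D.s p.1} := by
  rw [continuousOn_iff_continuous_domRestrict]
  exact hDtop.continuous_comp.comp
    (continuous_subtype_val.subtype_mk fun p : {p : Arr × Arr // D.r p.2 = D.s p.1} => p.2.symm)

lemma IsTopologicalGroupoid.continuousOn_leftTransl (hDtop : IsTopologicalGroupoid D) (a : Arr) :
    ContinuousOn (D.leftTransl a) {b | D.r b = D.s a} :=
  (hDtop.continuousOn_comp.comp (Continuous.prodMk_right a).continuousOn fun _ hb => hb).congr
    fun _ hb => leftTransl_of_r_eq hb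

variable [T2Space Obj] [MeasurableSpace Arr] [SecondCountableTopology Arr] [BorelSpace Arr]

lemma IsTopologicalGroupoid.measurable_leftTransl_uncurry (hDtop : IsTopologicalGroupoid D) :
    Measurable fun p : Arr × Arr => D.leftTransl p.1 p.2 := by
  refine measurable_of_restrict_of_restrict_compl hDtop.isClosed_composable.measurableSet ?_ ?_
  · have : ContinuousOn (fun p : Arr × Arr => D.leftTransl p.1 p.2)
        {p | D.r p.2 = D.s p.1} :=
      hDtop.continuousOn_comp.congr fun _ hp => leftTransl_of_r_eq hp
    exact this.domRestrict.measurable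
  · have : Set.domRestrict {p : Arr × Arr | D.r p.2 = D.s p.1}ᶜ
        (fun p => D.leftTransl p.1 p.2) = fun p => p.1.2 :=
      funext fun p => leftTransl_of_r_ne p.2
    rw [this]
    exact measurable_snd.comp measurable_subtype_coe

lemma IsTopologicalGroupoid.measurable_leftTransl (hDtop : IsTopologicalGroupoid D) (a : Arr) :
    Measurable (D.leftTransl a) :=
  hDtop.measurable_leftTransl_uncurry.comp measurable_prodMk_left

end Topology

section RadonFamilies

open Set

variable {X Y : Type} [TopologicalSpace X] [MeasurableSpace X] [BorelSpace X]

lemma IsOpen.measure_eq_iSup_lintegral [T2Space X] [LocallyCompactSpace X]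
    (ρ : Measure X) [ρ.Regular] {U : Set X} (hU : IsOpen U) :
    ρ U = ⨆ (f : X → ℝ) (_ : Continuous f ∧ HasCompactSupport f ∧
      (∀ x, f x ∈ Icc (0 : ℝ) 1) ∧ ∀ x ∉ U, f x = 0), ∫⁻ x, ENNReal.ofReal (f x) ∂ρ := by
  refine le_antisymm ?_ (iSup₂_le fun f hf => ?_)
  · rw [hU.measure_eq_iSup_isCompact]
    refine iSup_le fun K => iSup_le fun hKU => iSup_le fun hK => ?_
    obtain ⟨f, hf1, hf0, hfc, hf01⟩ := exists_continuous_one_zero_of_isCompact hK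
      hU.isClosed_compl (disjoint_compl_right_iff_subset.2 hKU)
    refine le_iSup₂_of_le (f : X → ℝ) ⟨f.continuous, hfc, hf01, fun x hx => hf0 hx⟩ ?_
    rw [← lintegral_indicator_one hK.measurableSet]
    refine lintegral_mono fun x => ?_
    by_cases hx : x ∈ K <;> simp [hx, hf1 _]
  · rw [← lintegral_indicator_one hU.measurableSet]
    refine lintegral_mono fun x => ?_
    by_cases hx : x ∈ U
    · simpa [hx] using (hf.2.2.1 x).2
    · simp [hx, hf.2.2.2 x hx]

variable [T2Space X] [LocallyCompactSpace X] [SecondCountableTopology X] [TopologicalSpace Y]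

lemma lowerSemicontinuous_measure_isOpen {κ : Y → Measure X}
    [∀ y, IsFiniteMeasureOnCompacts (κ y)]
    (hκ : ∀ f : X → ℝ, Continuous f → HasCompactSupport f → Continuous fun y => ∫ x, f x ∂κ y)
    {U : Set X} (hU : IsOpen U) : LowerSemicontinuous fun y => κ y U := by
  have : (fun y => κ y U) = fun y => ⨆ (f : X → ℝ) (_ : Continuous f ∧ HasCompactSupport f ∧
      (∀ x, f x ∈ Icc (0 : ℝ) 1) ∧ ∀ x ∉ U, f x = 0), ∫⁻ x, ENNReal.ofReal (f x) ∂κ y :=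
    funext fun y => hU.measure_eq_iSup_lintegral (κ y)
  rw [this]
  refine lowerSemicontinuous_iSup fun f => lowerSemicontinuous_iSup fun hf => ?_
  have hint : ∀ y, ∫⁻ x, ENNReal.ofReal (f x) ∂κ y = ENNReal.ofReal (∫ x, f x ∂κ y) :=
    fun y => (ofReal_integral_eq_lintegral_ofReal (hf.1.integrable_of_hasCompactSupport hf.2.1)
      (Eventually.of_forall fun x => (hf.2.2.1 x).1)).symm
  simp_rw [hint]
  exact (ENNReal.continuous_ofReal.comp (hκ f hf.1 hf.2.1)).lowerSemicontinuous

lemma MeasureTheory.Measure.measurable_of_continuous_integral [MeasurableSpace Y]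
    [OpensMeasurableSpace Y] {κ : Y → Measure X} [∀ y, IsFiniteMeasureOnCompacts (κ y)]
    (hκ : ∀ f : X → ℝ, Continuous f → HasCompactSupport f → Continuous fun y => ∫ x, f x ∂κ y) :
    Measurable κ := by
  -- The π-λ argument needs finite measures: work on an exhaustion by relatively compact opens.
  let K := CompactExhaustion.choice X
  let V : ℕ → Set X := fun n => interior (K n)
  have hVopen : ∀ n, IsOpen (V n) := fun n => isOpen_interior
  have hVdir : Directed (· ⊆ ·) V := (monotone_nat_of_le_succ fun n =>
    interior_mono (K.subset_succ n)).directed_le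
  have hVcover : ⋃ n, V n = univ := eq_univ_of_forall fun x =>
    mem_iUnion.2 ((K.exists_mem_nhds x).imp fun _ hn => mem_interior_iff_mem_nhds.2 hn)
  have hrestrict : ∀ n, Measurable fun y => (κ y).restrict (V n) := by
    intro n
    have : ∀ y, IsFiniteMeasure ((κ y).restrict (V n)) := fun y =>
      isFiniteMeasure_restrict.2 (measure_mono interior_subset |>.trans_lt
        (K.isCompact n).measure_lt_top).ne
    refine .measure_of_isPiSystem (S := {U | IsOpen U}) BorelSpace.measurable_eq
      isPiSystem_isOpen (fun U hU => ?_) ?_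
    · simp_rw [Measure.restrict_apply' (hVopen n).measurableSet]
      exact (lowerSemicontinuous_measure_isOpen hκ (hU.inter (hVopen n))).measurable
    · simp_rw [Measure.restrict_apply_univ]
      exact (lowerSemicontinuous_measure_isOpen hκ (hVopen n)).measurable
  refine Measure.measurable_of_measurable_coe _ fun s hs => ?_
  have hsup : ∀ y, κ y s = ⨆ n, (κ y).restrict (V n) s := fun y => by
    rw [← Measure.restrict_iUnion_apply_eq_iSup hVdir hs, hVcover, Measure.restrict_univ]
  simp_rw [hsup]
  exact .iSup fun n => (Measure.measurable_coe hs).comp (hrestrict n)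

end RadonFamilies

namespace MeasureTheory.Measure

open Set

variable {α β γ : Type} [MeasurableSpace α] [MeasurableSpace β] [MeasurableSpace γ]
  {κ : α → Measure β}

lemma AbsolutelyContinuous.bind {μ₁ μ₂ : Measure α} (h : μ₁ ≪ μ₂) (hκ : Measurable κ) :
    μ₁.bind κ ≪ μ₂.bind κ := by
  refine AbsolutelyContinuous.mk fun s hs h0 => ?_
  have hm : Measurable fun a => κ a s := (measurable_coe hs).comp hκ
  rw [bind_apply hs hκ.aemeasurable, lintegral_eq_zero_iff hm] at h0 ⊢
  exact h.ae_le h0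

lemma map_bind (μ : Measure α) (hκ : Measurable κ) {f : β → γ} (hf : Measurable f) :
    (μ.bind κ).map f = μ.bind fun a => (κ a).map f := by
  ext s hs
  have hm : Measurable fun a => (κ a).map f := (measurable_map f hf).comp hκ
  rw [map_apply hf hs, bind_apply (hf hs) hκ.aemeasurable,
    bind_apply hs hm.aemeasurable]
  simp_rw [map_apply hf hs]

lemma bind_map (μ : Measure α) {f : α → γ} (hf : Measurable f) {η : γ → Measure β}
    (hη : Measurable η) : (μ.map f).bind η = μ.bind (η ∘ f) := by
  rw [Measure.bind, Measure.bind, map_map hη hf]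

lemma map_bind_eq_withDensity (μ : Measure α) (hκ : Measurable κ) {f : β → α}
    (hf : Measurable f) (hfib : ∀ a, ∀ᵐ b ∂κ a, f b = a) :
    (μ.bind κ).map f = μ.withDensity fun a => κ a univ := by
  ext s hs
  rw [map_apply hf hs, bind_apply (hf hs) hκ.aemeasurable,
    withDensity_apply _ hs, ← lintegral_indicator hs]
  refine lintegral_congr fun a => ?_
  by_cases ha : a ∈ s
  · rw [indicator_of_mem ha]
    exact measure_congr (eventuallyEq_set.2 ((hfib a).mono fun b hb => by simp [hb, ha]))
  · rw [indicator_of_notMem ha]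
    exact measure_eq_zero_iff_ae_notMem.2 ((hfib a).mono fun b hb => by simp [hb, ha])

end MeasureTheory.Measure

namespace IsHaarSystemOn

open Set GroupoidData
open scoped ENNReal

variable {Arr Obj : Type} [TopologicalSpace Arr] [TopologicalSpace Obj] [MeasurableSpace Arr]
  {D : GroupoidData Arr Obj} {κ : Obj → Measure Arr}

lemma isFiniteMeasureOnCompacts (hκ : IsHaarSystemOn D univ κ) (u : Obj) :
    IsFiniteMeasureOnCompacts (κ u) :=
  ⟨fun {K} hK => hκ.2.2.1 u K hK⟩

lemma measure_r_ne (hκ : IsHaarSystemOn D univ κ) (u : Obj) : κ u {b | D.r b = u}ᶜ = 0 := by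
  simpa using hκ.1 u

lemma ae_r_eq (hκ : IsHaarSystemOn D univ κ) (u : Obj) : ∀ᵐ b ∂κ u, D.r b = u :=
  measure_eq_zero_iff_ae_notMem.1 (hκ.measure_r_ne u) |>.mono fun _ hb => not_not.1 hb

lemma measure_univ_ne_zero (hκ : IsHaarSystemOn D univ κ) (hD : D.IsGroupoid) (u : Obj) :
    κ u univ ≠ 0 :=
  (hκ.2.1 u univ isOpen_univ ⟨D.unit u, trivial, hD.r_unit u, trivial⟩).ne'

variable [T2Space Arr] [SecondCountableTopology Arr] [BorelSpace Arr]

lemma measurable [LocallyCompactSpace Arr] [MeasurableSpace Obj] [OpensMeasurableSpace Obj]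
    (hκ : IsHaarSystemOn D univ κ) : Measurable κ :=
  have := hκ.isFiniteMeasureOnCompacts
  Measure.measurable_of_continuous_integral hκ.2.2.2.2

variable [T2Space Obj]

lemma isFiniteMeasureOnCompacts_map_leftTransl (hD : D.IsGroupoid)
    (hDtop : IsTopologicalGroupoid D) (hκ : IsHaarSystemOn D univ κ) (a : Arr) :
    IsFiniteMeasureOnCompacts ((κ (D.s a)).map (D.leftTransl a)) := by
  have := hκ.isFiniteMeasureOnCompacts (D.s a)
  refine ⟨fun {K} hK => ?_⟩
  have hsub : D.leftTransl a ⁻¹' K ∩ {b | D.r b = D.s a} ⊆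
      D.leftTransl (D.inv a) '' (K ∩ {c | D.r c = D.r a}) := by
    rintro b ⟨hbK, hb⟩
    refine ⟨D.leftTransl a b, ⟨hbK, ?_⟩, hD.leftTransl_inv_leftTransl hb⟩
    rw [mem_ofPred, leftTransl_of_r_eq hb, hD.r_comp _ _ hb.symm]
  have himg : IsCompact (D.leftTransl (D.inv a) '' (K ∩ {c | D.r c = D.r a})) :=
    (hK.inter_right (isClosed_eq hDtop.continuous_r continuous_const)).image_of_continuousOn
      ((hDtop.continuousOn_leftTransl _).mono fun c hc => hc.2.trans (hD.s_inv a).symm)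
  rw [Measure.map_apply (hDtop.measurable_leftTransl a) hK.measurableSet,
    ← measure_inter_conull (hκ.measure_r_ne (D.s a))]
  exact (measure_mono hsub).trans_lt himg.measure_lt_top

variable [LocallyCompactSpace Arr]

lemma map_leftTransl (hD : D.IsGroupoid) (hDtop : IsTopologicalGroupoid D)
    (hκ : IsHaarSystemOn D univ κ) (a : Arr) :
    (κ (D.s a)).map (D.leftTransl a) = κ (D.r a) := by
  have := hκ.isFiniteMeasureOnCompacts
  have := hκ.isFiniteMeasureOnCompacts_map_leftTransl hD hDtop a
  refine Measure.ext_of_integral_eq_on_compactlySupported fun f => ?_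
  rw [integral_map (hDtop.measurable_leftTransl a).aemeasurable
    (map_continuous f).aestronglyMeasurable]
  calc ∫ b, f (D.leftTransl a b) ∂κ (D.s a) = ∫ b, f (D.comp a b) ∂κ (D.s a) :=
        integral_congr_ae <| (hκ.ae_r_eq _).mono fun b hb => congrArg f (leftTransl_of_r_eq hb)
    _ = ∫ b, f b ∂κ (D.r a) := hκ.2.2.2.1 a trivial f f.continuous f.hasCompactSupport

lemma eq_map_leftTransl_inv (hD : D.IsGroupoid) (hDtop : IsTopologicalGroupoid D)
    (hκ : IsHaarSystemOn D univ κ) {γ : Arr} {u : Obj} (hγ : D.r γ = u) :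
    κ (D.s γ) = (κ u).map (D.leftTransl (D.inv γ)) := by
  rw [← hD.r_inv γ, ← hκ.map_leftTransl hD hDtop, hD.s_inv, hγ]

variable [MeasurableSpace Obj] [BorelSpace Obj]

lemma lintegral_bind_s (hD : D.IsGroupoid) (hDtop : IsTopologicalGroupoid D)
    (hκ : IsHaarSystemOn D univ κ) (u : Obj) {f : Arr → ℝ≥0∞} (hf : Measurable f) :
    ∫⁻ x, f x ∂((κ u).bind (κ ∘ D.s)) =
      ∫⁻ γ, ∫⁻ η, f (D.leftTransl (D.inv γ) η) ∂κ u ∂κ u := by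
  rw [Measure.lintegral_bind (hκ.measurable.comp hDtop.continuous_s.measurable).aemeasurable
    hf.aemeasurable]
  refine lintegral_congr_ae <| (hκ.ae_r_eq u).mono fun γ hγ => ?_
  change ∫⁻ x, f x ∂κ (D.s γ) = _
  rw [hκ.eq_map_leftTransl_inv hD hDtop hγ,
    lintegral_map hf (hDtop.measurable_leftTransl _)]

lemma map_inv_bind_s (hD : D.IsGroupoid) (hDtop : IsTopologicalGroupoid D)
    (hκ : IsHaarSystemOn D univ κ) (u : Obj) :
    ((κ u).bind (κ ∘ D.s)).map D.inv = (κ u).bind (κ ∘ D.s) := by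
  have := hκ.isFiniteMeasureOnCompacts u
  have hinv : Measurable D.inv := hDtop.continuous_inv.measurable
  refine Measure.ext_of_lintegral _ fun f hf => ?_
  calc ∫⁻ x, f x ∂(((κ u).bind (κ ∘ D.s)).map D.inv)
      = ∫⁻ γ, ∫⁻ η, f (D.inv (D.leftTransl (D.inv γ) η)) ∂κ u ∂κ u := by
        rw [lintegral_map hf hinv,
          hκ.lintegral_bind_s hD hDtop u (f := fun x => f (D.inv x)) (hf.comp hinv)]
    _ = ∫⁻ γ, ∫⁻ η, f (D.leftTransl (D.inv η) γ) ∂κ u ∂κ u :=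
        lintegral_congr_ae <| (hκ.ae_r_eq u).mono fun γ hγ =>
          lintegral_congr_ae <| (hκ.ae_r_eq u).mono fun η hη =>
            congrArg f (hD.inv_leftTransl_inv (hγ.trans hη.symm))
    _ = ∫⁻ η, ∫⁻ γ, f (D.leftTransl (D.inv η) γ) ∂κ u ∂κ u :=
        lintegral_lintegral_swap (hf.comp (hDtop.measurable_leftTransl_uncurry.comp
          ((hinv.comp measurable_snd).prodMk measurable_fst))).aemeasurable
    _ = ∫⁻ x, f x ∂((κ u).bind (κ ∘ D.s)) := (hκ.lintegral_bind_s hD hDtop u hf).symm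

lemma map_inv_nuMeasure_map_s (hD : D.IsGroupoid) (hDtop : IsTopologicalGroupoid D)
    (hκ : IsHaarSystemOn D univ κ) (μ : Measure Obj) :
    (nuMeasure κ ((nuMeasure κ μ).map D.s)).map D.inv =
      nuMeasure κ ((nuMeasure κ μ).map D.s) := by
  have hκm := hκ.measurable
  have hs : Measurable D.s := hDtop.continuous_s.measurable
  have hκs : Measurable (κ ∘ D.s) := hκm.comp hs
  rw [nuMeasure, nuMeasure, Measure.bind_map _ hs hκm,
    Measure.bind_bind hκm.aemeasurable hκs.aemeasurable,
    Measure.map_bind _ (κ := fun u => (κ u).bind (κ ∘ D.s))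
      ((Measure.measurable_bind' hκs).comp hκm) hDtop.continuous_inv.measurable]
  exact Measure.bind_congr_right (Eventually.of_forall (hκ.map_inv_bind_s hD hDtop))

end IsHaarSystemOn

section QuasiInvariance

open Set

lemma IsQuasiInvariant.of_absolutelyContinuous {α β : Type} [MeasurableSpace α]
    [MeasurableSpace β] {κ : β → Measure α} {inv : α → α} (hκ : Measurable κ)
    (hinv : Measurable inv) {τ τ' : Measure β} (h₁ : τ ≪ τ') (h₂ : τ' ≪ τ)
    (hq : IsQuasiInvariant κ inv τ') : IsQuasiInvariant κ inv τ :=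
  have b₁ : nuMeasure κ τ ≪ nuMeasure κ τ' := h₁.bind hκ
  have b₂ : nuMeasure κ τ' ≪ nuMeasure κ τ := h₂.bind hκ
  ⟨b₁.trans (hq.1.trans (b₂.map hinv)), (b₁.map hinv).trans (hq.2.trans b₂)⟩

variable {Arr Obj : Type} [TopologicalSpace Arr] [TopologicalSpace Obj] [T2Space Arr]
  [SecondCountableTopology Arr] [LocallyCompactSpace Arr] [MeasurableSpace Arr]
  [MeasurableSpace Obj] [BorelSpace Arr] [BorelSpace Obj]
  {D : GroupoidData Arr Obj} {κ : Obj → Measure Arr}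

lemma IsQuasiInvariant.equiv_map_s_nuMeasure (hD : D.IsGroupoid)
    (hDtop : IsTopologicalGroupoid D) (hκ : IsHaarSystemOn D univ κ) {μ : Measure Obj}
    (hq : IsQuasiInvariant κ D.inv μ) :
    μ ≪ (nuMeasure κ μ).map D.s ∧ (nuMeasure κ μ).map D.s ≪ μ := by
  have hκm := hκ.measurable
  have hr : Measurable D.r := hDtop.continuous_r.measurable
  have hrs : (nuMeasure κ μ).map D.s = ((nuMeasure κ μ).map D.inv).map D.r := by
    rw [Measure.map_map hr hDtop.continuous_inv.measurable,
      show D.r ∘ D.inv = D.s from funext hD.r_inv]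
  have hwd : (nuMeasure κ μ).map D.r = μ.withDensity fun u => κ u univ :=
    Measure.map_bind_eq_withDensity μ hκm hr hκ.ae_r_eq
  have hμr : μ ≪ (nuMeasure κ μ).map D.r := by
    rw [hwd]
    exact withDensity_absolutelyContinuous'
      ((Measure.measurable_coe MeasurableSet.univ).comp hκm).aemeasurable
      (ae_of_all _ (hκ.measure_univ_ne_zero hD))
  have hrμ : (nuMeasure κ μ).map D.r ≪ μ := hwd ▸ withDensity_absolutelyContinuous _ _
  rw [hrs]
  exact ⟨hμr.trans (hq.1.map hr), (hq.2.map hr).trans hrμ⟩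

variable [T2Space Obj]

lemma IsHaarSystemOn.isQuasiInvariant_map_s (hD : D.IsGroupoid)
    (hDtop : IsTopologicalGroupoid D) (hκ : IsHaarSystemOn D univ κ) (μ : Measure Obj) :
    IsQuasiInvariant κ D.inv ((nuMeasure κ μ).map D.s) := by
  rw [IsQuasiInvariant, hκ.map_inv_nuMeasure_map_s hD hDtop μ]
  exact ⟨.rfl, .rfl⟩

end QuasiInvariance

theorem statement5_general {Arr Obj : Type} [TopologicalSpace Arr] [TopologicalSpace Obj]
    [T2Space Arr] [T2Space Obj] [SecondCountableTopology Arr]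
    [LocallyCompactSpace Arr]
    [MeasurableSpace Arr] [MeasurableSpace Obj] [BorelSpace Arr] [BorelSpace Obj]
    (D : GroupoidData Arr Obj) (hD : D.IsGroupoid) (hDtop : IsTopologicalGroupoid D)
    (κ : Obj → MeasureTheory.Measure Arr) (hκ : IsHaarSystemOn D Set.univ κ)
    (μ : MeasureTheory.Measure Obj)
    (ν₀ : MeasureTheory.Measure Arr)
    (hν₀ : ν₀ ≪ nuMeasure κ μ ∧ nuMeasure κ μ ≪ ν₀) :
    IsQuasiInvariant κ D.inv (ν₀.map D.s) ∧
    (IsQuasiInvariant κ D.inv μ → (μ ≪ ν₀.map D.s ∧ ν₀.map D.s ≪ μ)) := by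
  obtain ⟨hν₀ν, hνν₀⟩ := hν₀
  have hs : Measurable D.s := hDtop.continuous_s.measurable
  refine ⟨(hκ.isQuasiInvariant_map_s hD hDtop μ).of_absolutelyContinuous hκ.measurable
    hDtop.continuous_inv.measurable (hν₀ν.map hs) (hνν₀.map hs), fun hq => ?_⟩
  obtain ⟨hμs, hsμ⟩ := hq.equiv_map_s_nuMeasure hD hDtop hκ
  exact ⟨hμs.trans (hνν₀.map hs), (hν₀ν.map hs).trans hsμ⟩

/-- For a second countable locally compact Hausdorff groupoid
`S` with Haar system `κ`, a Radon measure `μ` on the unit space, `ν = μ∘κ`,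
`ν₀` a finite measure equivalent to `ν`, the saturation `[μ] = s_*ν₀` is
quasi-invariant; and if `μ` is quasi-invariant then `μ` and `[μ]` are
equivalent. -/
theorem statement5 {Arr Obj : Type} [TopologicalSpace Arr] [TopologicalSpace Obj]
    [T2Space Arr] [T2Space Obj] [SecondCountableTopology Arr]
    [SecondCountableTopology Obj] [LocallyCompactSpace Arr] [LocallyCompactSpace Obj]
    [MeasurableSpace Arr] [MeasurableSpace Obj] [BorelSpace Arr] [BorelSpace Obj]
    (D : GroupoidData Arr Obj) (hD : D.IsGroupoid) (hDtop : IsTopologicalGroupoid D)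
    (κ : Obj → MeasureTheory.Measure Arr) (hκ : IsHaarSystemOn D Set.univ κ)
    (μ : MeasureTheory.Measure Obj) [μ.Regular]
    (ν₀ : MeasureTheory.Measure Arr) [MeasureTheory.IsFiniteMeasure ν₀]
    (hν₀ : ν₀ ≪ nuMeasure κ μ ∧ nuMeasure κ μ ≪ ν₀) :
    IsQuasiInvariant κ D.inv (ν₀.map D.s) ∧
    (IsQuasiInvariant κ D.inv μ → (μ ≪ ν₀.map D.s ∧ ν₀.map D.s ≪ μ)) :=
  statement5_general D hD hDtop κ hκ μ ν₀ hν₀
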